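/- Let $(\alpha_m)$ and $(\beta_m)$ be nondecreasing sequences of positive reals tending to infinity, and suppose the graded spaces $\Lambda_\infty(\alpha)$ and $\Lambda_\infty(\beta)$ are tamely isomorphic (via an isomorphism $T$ with shift $A$, tame in both directions). Then there exists a constant $c \ge 1$ and an index shift such that $\frac{1}{c}\,\alpha_m \le \beta_m \le c\,\alpha_m$ for all sufficiently large $m$; in fact, using the diameter formula $d_m(V_k, V_l) = e^{(l-k)\alpha_m}$, one obtains $\limsup_m \beta_m/\alpha_m \le \frac{k - l + 2A}{k - l}$ and $\liminf_m \beta_m/\alpha_m \ge \frac{k-l}{k - l + 2A}$ for all $k > l$, hence $\lim_m \beta_m / \alpha_m = 1$. -/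
import Mathlib


open Filter

/-- The infinite type power series space `Λ_∞(α)` realized as the submodule of
`ℕ → ℂ` of sequences with all norms `|x|_k = ∑_m |x_m| e^{k α_m}` finite. -/
noncomputable def LamInf (α : ℕ → ℝ) : Submodule ℂ (ℕ → ℂ) where
  carrier := {x | ∀ k : ℕ, Summable fun m => ‖x m‖ * Real.exp (k * α m)}
  add_mem' := by
    intro a b ha hb k
    refine Summable.of_nonneg_of_le (fun m => by positivity) (fun m => ?_)
      ((ha k).add (hb k))
    have : ‖a m + b m‖ ≤ ‖a m‖ + ‖b m‖ := norm_add_le _ _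
    calc ‖(a + b) m‖ * Real.exp (k * α m)
        ≤ (‖a m‖ + ‖b m‖) * Real.exp (k * α m) := by
          apply mul_le_mul_of_nonneg_right _ (Real.exp_nonneg _)
          simpa using this
      _ = ‖a m‖ * Real.exp (k * α m) + ‖b m‖ * Real.exp (k * α m) := by ring
  zero_mem' := by
    intro k
    simpa using summable_zero
  smul_mem' := by
    intro c x hx k
    have := (hx k).mul_left ‖c‖
    refine Summable.of_nonneg_of_le (fun m => by positivity) (fun m => ?_) this
    simp [norm_smul, mul_assoc]

/-- The `k`-th norm of an element of `Λ_∞(α)`. -/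
noncomputable def lamNorm (α : ℕ → ℝ) (k : ℕ) (x : LamInf α) : ℝ :=
  ∑' m : ℕ, ‖(x : ℕ → ℂ) m‖ * Real.exp (k * α m)

namespace Stmt17

variable {γ : ℕ → ℝ}

lemma summable_lam (x : LamInf γ) (k : ℕ) :
    Summable fun m => ‖(x : ℕ → ℂ) m‖ * Real.exp (k * γ m) := x.2 k

lemma lamNorm_nonneg (k : ℕ) (x : LamInf γ) : 0 ≤ lamNorm γ k x :=
  tsum_nonneg fun m => by positivity

/-- Extension of a finite vector by zero. -/
noncomputable def extendFun (n : ℕ) (v : Fin n → ℂ) : ℕ → ℂ :=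
  fun i => if h : i < n then v ⟨i, h⟩ else 0

lemma extendFun_mem (γ : ℕ → ℝ) (n : ℕ) (v : Fin n → ℂ) : extendFun n v ∈ LamInf γ := by
  intro k
  apply summable_of_ne_finset_zero (s := Finset.range n)
  intro b hb
  simp only [Finset.mem_range, not_lt] at hb
  simp [extendFun, Nat.not_lt.mpr hb]

noncomputable def extendL (γ : ℕ → ℝ) (n : ℕ) : (Fin n → ℂ) →ₗ[ℂ] LamInf γ where
  toFun v := ⟨extendFun n v, extendFun_mem γ n v⟩
  map_add' v w := by
    ext i
    by_cases h : i < n <;> simp [extendFun, h]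
  map_smul' c v := by
    ext i
    by_cases h : i < n <;> simp [extendFun, h]

def projL (γ : ℕ → ℝ) (n : ℕ) : LamInf γ →ₗ[ℂ] (Fin n → ℂ) where
  toFun x := fun j => (x : ℕ → ℂ) j
  map_add' x y := by ext j; simp
  map_smul' c x := by ext j; simp

/-- Weighted finite-dimensional norm. -/
noncomputable def wN (γ : ℕ → ℝ) (q : ℕ) {n : ℕ} (v : Fin n → ℂ) : ℝ :=
  ∑ j : Fin n, ‖v j‖ * Real.exp (q * γ j)

lemma wN_nonneg (q : ℕ) {n : ℕ} (v : Fin n → ℂ) : 0 ≤ wN γ q v :=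
  Finset.sum_nonneg fun j _ => by positivity

lemma wN_smul (q : ℕ) {n : ℕ} (c : ℂ) (v : Fin n → ℂ) :
    wN γ q (c • v) = ‖c‖ * wN γ q v := by
  simp [wN, Finset.mul_sum, norm_smul, mul_assoc]

lemma projL_extendL (γ : ℕ → ℝ) (n : ℕ) (v : Fin n → ℂ) :
    projL γ n (extendL γ n v) = v := by
  ext j
  simp [projL, extendL, extendFun, j.isLt]

lemma lamNorm_extendL (γ : ℕ → ℝ) (q : ℕ) (n : ℕ) (v : Fin n → ℂ) :
    lamNorm γ q (extendL γ n v) = wN γ q v := by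
  unfold lamNorm
  rw [tsum_eq_sum (s := Finset.range n) (by
    intro b hb
    simp only [Finset.mem_range, not_lt] at hb
    simp [extendL, extendFun, Nat.not_lt.mpr hb])]
  rw [Finset.sum_range fun i => ‖(((extendL γ n v) : LamInf γ) : ℕ → ℂ) i‖ * Real.exp (q * γ i)]
  apply Finset.sum_congr rfl
  intro j _
  simp [extendL, extendFun, j.isLt, wN]

lemma wN_projL_le (γ : ℕ → ℝ) (q n : ℕ) (x : LamInf γ) :
    wN γ q (projL γ n x) ≤ lamNorm γ q x := by
  unfold wN lamNorm
  have : ∀ j : Fin n, ‖projL γ n x j‖ * Real.exp (q * γ j)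
      = (fun i : ℕ => ‖(x : ℕ → ℂ) i‖ * Real.exp (q * γ i)) (j : ℕ) := fun j => rfl
  rw [Finset.sum_congr rfl fun j _ => this j,
    Fin.sum_univ_eq_sum_range (fun i : ℕ => ‖(x : ℕ → ℂ) i‖ * Real.exp (q * γ i)) n]
  exact Summable.sum_le_tsum _ (fun i _ => by positivity) (summable_lam x q)


lemma eq_top_of_approx (n : ℕ) (N : (Fin n → ℂ) → ℝ)
    (hN0 : ∀ v, ‖v‖ ≤ N v)
    (hNsmul : ∀ (c : ℂ) (v), N (c • v) = ‖c‖ * N v)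
    (L : Submodule ℂ (Fin n → ℂ)) {r ε : ℝ} (hr : 0 < r) (hε0 : 0 ≤ ε) (hε : ε < 1)
    (h : ∀ v, N v ≤ r → ∃ w ∈ L, N (v - w) ≤ ε * r) : L = ⊤ := by
  have key : ∀ j : ℕ, ∀ v, N v ≤ r → ∃ w ∈ L, N (v - w) ≤ ε ^ j * r := by
    intro j
    induction j with
    | zero => intro v hv; exact ⟨0, L.zero_mem, by simpa using hv⟩
    | succ j ih =>
      intro v hv
      obtain ⟨w₁, hw₁L, hw₁⟩ := h v hv
      rcases eq_or_lt_of_le hε0 with hez | hepos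
      · refine ⟨w₁, hw₁L, ?_⟩
        calc N (v - w₁) ≤ ε * r := hw₁
          _ ≤ ε ^ (j + 1) * r := by rw [← hez]; simp
      · set u : Fin n → ℂ := ((ε : ℂ))⁻¹ • (v - w₁) with hu
        have hNu : N u ≤ r := by
          rw [hu, hNsmul]
          have : ‖((ε : ℂ))⁻¹‖ = ε⁻¹ := by
            rw [norm_inv, Complex.norm_real, Real.norm_of_nonneg hε0]
          rw [this]
          calc ε⁻¹ * N (v - w₁) ≤ ε⁻¹ * (ε * r) := by
                apply mul_le_mul_of_nonneg_left hw₁ (by positivity)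
            _ = r := by field_simp
        obtain ⟨w₂, hw₂L, hw₂⟩ := ih u hNu
        refine ⟨w₁ + (ε : ℂ) • w₂, L.add_mem hw₁L (L.smul_mem _ hw₂L), ?_⟩
        have hrw : v - (w₁ + (ε : ℂ) • w₂) = (ε : ℂ) • (u - w₂) := by
          rw [hu, smul_sub, smul_inv_smul₀ (by exact_mod_cast hepos.ne')]
          abel
        rw [hrw, hNsmul]
        have : ‖((ε : ℂ))‖ = ε := by rw [Complex.norm_real, Real.norm_of_nonneg hε0]
        rw [this]
        calc ε * N (u - w₂) ≤ ε * (ε ^ j * r) := by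
              apply mul_le_mul_of_nonneg_left hw₂ hε0
          _ = ε ^ (j + 1) * r := by ring
  have hclosed : IsClosed (L : Set (Fin n → ℂ)) := Submodule.closed_of_finiteDimensional L
  have hmem : ∀ v, N v ≤ r → v ∈ L := by
    intro v hv
    have : v ∈ closure (L : Set (Fin n → ℂ)) := by
      rw [Metric.mem_closure_iff]
      intro δ hδ
      obtain ⟨j, hj⟩ := exists_pow_lt_of_lt_one (div_pos hδ hr) hε
      obtain ⟨w, hwL, hw⟩ := key j v hv
      refine ⟨w, hwL, ?_⟩
      rw [dist_eq_norm]
      calc ‖v - w‖ ≤ N (v - w) := hN0 _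
        _ ≤ ε ^ j * r := hw
        _ < δ := by
            rw [lt_div_iff₀ hr] at hj
            linarith
    rwa [hclosed.closure_eq] at this
  rw [eq_top_iff]
  intro v _
  by_cases hv : N v ≤ r
  · exact hmem v hv
  · push_neg at hv
    have hNv : 0 < N v := lt_trans hr hv
    have h1 : N (((r / N v : ℝ) : ℂ) • v) ≤ r := by
      rw [hNsmul, Complex.norm_real, Real.norm_of_nonneg (by positivity)]
      rw [div_mul_eq_mul_div, mul_div_assoc]
      nlinarith [div_self hNv.ne']
    have h2 := hmem _ h1
    have h3 : (((r / N v : ℝ) : ℂ))⁻¹ • (((r / N v : ℝ) : ℂ) • v) ∈ L :=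
      L.smul_mem _ h2
    rwa [inv_smul_smul₀ (by
      simp only [ne_eq, Complex.ofReal_eq_zero]
      positivity)] at h3

set_option maxHeartbeats 1000000 in
lemma main_ineq (α β : ℕ → ℝ)
    (hβpos : ∀ m, 0 < β m) (hαmono : Monotone α) (hβmono : Monotone β)
    (T : LamInf α ≃ₗ[ℂ] LamInf β) (A k l : ℕ) (hlk : l < k)
    (C C' : ℝ) (hC : 0 < C) (hC' : 0 < C')
    (hTl : ∀ x : LamInf α, lamNorm β l (T x) ≤ C * lamNorm α (l + A) x)
    (hTk : ∀ y : LamInf β, lamNorm α (k + A) (T.symm y) ≤ C' * lamNorm β (k + 2 * A) y)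
    (m : ℕ) :
    Real.exp (((l : ℝ) - ((k : ℝ) + 2 * A)) * β m) ≤
      C * C' * Real.exp (((l : ℝ) - k) * α m) := by
  set r : ℝ := Real.exp (((l : ℝ) - ((k : ℝ) + 2 * A)) * β m) with hrdef
  set D : ℝ := C * C' * Real.exp (((l : ℝ) - k) * α m) with hDdef
  by_contra hcon
  push_neg at hcon
  have hrpos : 0 < r := Real.exp_pos _
  have hDpos : 0 < D := by positivity
  -- the finite-rank subspaces
  set L₀ : Submodule ℂ (LamInf α) := LinearMap.range (extendL α m) with hL₀
  set L : Submodule ℂ (LamInf β) := L₀.map (T : LamInf α →ₗ[ℂ] LamInf β) with hL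
  -- Step A: approximation of the unit ball of level k+2A by L in the level-l norm
  have hupper : ∀ z : LamInf β, lamNorm β (k + 2 * A) z ≤ 1 →
      ∃ w ∈ L, lamNorm β l (z - w) ≤ D := by
    intro z hz
    set x : LamInf α := T.symm z with hx
    have hxk : lamNorm α (k + A) x ≤ C' := by
      calc lamNorm α (k + A) x ≤ C' * lamNorm β (k + 2 * A) z := hTk z
        _ ≤ C' * 1 := by nlinarith
        _ = C' := mul_one C'
    set y : LamInf α := extendL α m (projL α m x) with hy
    refine ⟨T y, ⟨y, ⟨projL α m x, rfl⟩, rfl⟩, ?_⟩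
    have hzw : z - T y = T (x - y) := by
      rw [map_sub, hx, T.apply_symm_apply]
    rw [hzw]
    have hxy : lamNorm α (l + A) (x - y) ≤
        Real.exp (((l : ℝ) - k) * α m) * lamNorm α (k + A) x := by
      unfold lamNorm
      rw [← tsum_mul_left]
      apply Summable.tsum_le_tsum _ (summable_lam (x - y) (l + A))
        ((summable_lam x (k + A)).mul_left _)
      intro i
      have hxyi : ((x - y : LamInf α) : ℕ → ℂ) i = if i < m then 0 else (x : ℕ → ℂ) i := by
        by_cases h : i < m <;>
          simp [hy, extendL, extendFun, projL, h]
      by_cases h : i < m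
      · rw [hxyi, if_pos h]
        simp only [norm_zero, zero_mul]
        positivity
      · rw [hxyi, if_neg h]
        push_neg at h
        have hαm : α m ≤ α i := hαmono h
        have hexp : Real.exp ((l + A : ℕ) * α i) ≤
            Real.exp (((l : ℝ) - k) * α m) * Real.exp ((k + A : ℕ) * α i) := by
          rw [← Real.exp_add, Real.exp_le_exp]
          push_cast
          have hkl : (0 : ℝ) ≤ (k : ℝ) - l := by
            have hlk' : (l : ℝ) ≤ k := by exact_mod_cast hlk.le
            linarith
          have := mul_le_mul_of_nonneg_left hαm hkl
          linarith [this]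
        calc ‖(x : ℕ → ℂ) i‖ * Real.exp ((l + A : ℕ) * α i)
            ≤ ‖(x : ℕ → ℂ) i‖ * (Real.exp (((l : ℝ) - k) * α m) *
              Real.exp ((k + A : ℕ) * α i)) := by
              apply mul_le_mul_of_nonneg_left hexp (norm_nonneg _)
          _ = Real.exp (((l : ℝ) - k) * α m) *
              (‖(x : ℕ → ℂ) i‖ * Real.exp ((k + A : ℕ) * α i)) := by ring
    calc lamNorm β l (T (x - y)) ≤ C * lamNorm α (l + A) (x - y) := hTl _
      _ ≤ C * (Real.exp (((l : ℝ) - k) * α m) * lamNorm α (k + A) x) := by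
          apply mul_le_mul_of_nonneg_left hxy hC.le
      _ ≤ C * (Real.exp (((l : ℝ) - k) * α m) * C') := by
          apply mul_le_mul_of_nonneg_left _ hC.le
          exact mul_le_mul_of_nonneg_left hxk (Real.exp_pos _).le
      _ = D := by rw [hDdef]; ring
  -- Step B: pull back to the finite coordinate space
  set N : (Fin (m + 1) → ℂ) → ℝ := wN β l with hN
  set L' : Submodule ℂ (Fin (m + 1) → ℂ) := L.map (projL β (m + 1)) with hL'
  have hN0 : ∀ v, ‖v‖ ≤ N v := by
    intro v
    rw [pi_norm_le_iff_of_nonneg (wN_nonneg l v)]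
    intro j
    calc ‖v j‖ ≤ ‖v j‖ * Real.exp (l * β j) := by
          nlinarith [Real.one_le_exp (mul_nonneg (Nat.cast_nonneg l) (hβpos j).le),
            norm_nonneg (v j)]
      _ ≤ N v := Finset.single_le_sum (f := fun j => ‖v j‖ * Real.exp (l * β j))
          (fun i _ => by positivity) (Finset.mem_univ j)
  have hNsmul : ∀ (c : ℂ) (v), N (c • v) = ‖c‖ * N v := fun c v => wN_smul l c v
  have hstep : ∀ v, N v ≤ r → ∃ w' ∈ L', N (v - w') ≤ (D / r) * r := by
    intro v hv
    set z : LamInf β := extendL β (m + 1) v with hz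
    have h1 : lamNorm β (k + 2 * A) z ≤ 1 := by
      rw [hz, lamNorm_extendL]
      have hterm : ∀ j : Fin (m + 1),
          ‖v j‖ * Real.exp ((k + 2 * A : ℕ) * β j) ≤
          Real.exp (((k : ℝ) + 2 * A - l) * β m) * (‖v j‖ * Real.exp (l * β j)) := by
        intro j
        have hβj : β j ≤ β m := hβmono (Nat.lt_succ_iff.mp j.isLt)
        have hexp : Real.exp ((k + 2 * A : ℕ) * β j) ≤
            Real.exp (((k : ℝ) + 2 * A - l) * β m) * Real.exp (l * β j) := by
          rw [← Real.exp_add, Real.exp_le_exp]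
          push_cast
          have hc : (0 : ℝ) ≤ (k : ℝ) + 2 * A - l := by
            have : (l : ℝ) ≤ k := by exact_mod_cast hlk.le
            linarith
          have := mul_le_mul_of_nonneg_left hβj hc
          linarith [this]
        calc ‖v j‖ * Real.exp ((k + 2 * A : ℕ) * β j)
            ≤ ‖v j‖ * (Real.exp (((k : ℝ) + 2 * A - l) * β m) * Real.exp (l * β j)) :=
              mul_le_mul_of_nonneg_left hexp (norm_nonneg _)
          _ = Real.exp (((k : ℝ) + 2 * A - l) * β m) * (‖v j‖ * Real.exp (l * β j)) := by
              ring
      calc wN β (k + 2 * A) v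
          ≤ ∑ j : Fin (m + 1),
              Real.exp (((k : ℝ) + 2 * A - l) * β m) * (‖v j‖ * Real.exp (l * β j)) :=
            Finset.sum_le_sum fun j _ => hterm j
        _ = Real.exp (((k : ℝ) + 2 * A - l) * β m) * N v := by
            rw [← Finset.mul_sum]; rfl
        _ ≤ Real.exp (((k : ℝ) + 2 * A - l) * β m) * r :=
            mul_le_mul_of_nonneg_left hv (Real.exp_pos _).le
        _ = 1 := by
            rw [hrdef, ← Real.exp_add]
            rw [show ((k : ℝ) + 2 * A - l) * β m + ((l : ℝ) - ((k : ℝ) + 2 * A)) * β m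
              = 0 by ring, Real.exp_zero]
    obtain ⟨w, hwL, hw⟩ := hupper z h1
    refine ⟨projL β (m + 1) w, ⟨w, hwL, rfl⟩, ?_⟩
    have hproj : v - projL β (m + 1) w = projL β (m + 1) (z - w) := by
      rw [map_sub, hz, projL_extendL]
    rw [hproj]
    calc N (projL β (m + 1) (z - w)) ≤ lamNorm β l (z - w) := wN_projL_le β l (m + 1) (z - w)
      _ ≤ D := hw
      _ = (D / r) * r := by field_simp
  have htop : L' = ⊤ := by
    apply eq_top_of_approx (m + 1) N hN0 hNsmul L' hrpos
      (by positivity) ((div_lt_one hrpos).mpr hcon) hstep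
  -- dimension count
  have i1 : Module.Finite ℂ L₀ := Module.Finite.range (extendL α m)
  have i2 : Module.Finite ℂ L := Module.Finite.map L₀ (T : LamInf α →ₗ[ℂ] LamInf β)
  have d0 : Module.finrank ℂ L₀ ≤ m := by
    have := LinearMap.finrank_range_le (extendL α m)
    rwa [Module.finrank_fin_fun] at this
  have d1 : Module.finrank ℂ L ≤ m :=
    le_trans (Submodule.finrank_map_le (T : LamInf α →ₗ[ℂ] LamInf β) L₀) d0
  have d2 : Module.finrank ℂ L' ≤ m :=
    le_trans (Submodule.finrank_map_le (projL β (m + 1)) L) d1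
  rw [htop, finrank_top, Module.finrank_fin_fun] at d2
  omega

end Stmt17

/-- rigidity of exponent sequences under tame isomorphism: if
`Λ_∞(α)` and `Λ_∞(β)` are tamely isomorphic via `T` with shift `A`, then there is
`c ≥ 1` with `α_m / c ≤ β_m ≤ c α_m` for large `m`; moreover for all `k > l`,
`limsup β_m/α_m ≤ (k-l+2A)/(k-l)` and `liminf β_m/α_m ≥ (k-l)/(k-l+2A)`, and
`β_m/α_m → 1`. -/
theorem stmt_17 (α β : ℕ → ℝ)
    (hαpos : ∀ m, 0 < α m) (hβpos : ∀ m, 0 < β m)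
    (hαmono : Monotone α) (hβmono : Monotone β)
    (hαtop : Tendsto α atTop atTop) (hβtop : Tendsto β atTop atTop)
    (T : LamInf α ≃ₗ[ℂ] LamInf β) (A : ℕ)
    (hT : ∀ k : ℕ, ∃ C : ℝ, 0 < C ∧ ∀ x : LamInf α,
      lamNorm β k (T x) ≤ C * lamNorm α (k + A) x)
    (hTsymm : ∀ k : ℕ, ∃ C : ℝ, 0 < C ∧ ∀ y : LamInf β,
      lamNorm α k (T.symm y) ≤ C * lamNorm β (k + A) y) :
    (∃ c : ℝ, 1 ≤ c ∧ ∀ᶠ m in atTop, α m / c ≤ β m ∧ β m ≤ c * α m) ∧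
    (∀ k l : ℕ, l < k →
      limsup (fun m => β m / α m) atTop ≤ ((k : ℝ) - l + 2 * A) / ((k : ℝ) - l) ∧
      ((k : ℝ) - l) / ((k : ℝ) - l + 2 * A) ≤ liminf (fun m => β m / α m) atTop) ∧
    Tendsto (fun m => β m / α m) atTop (nhds 1) := by
  classical
  have S1 : ∀ k l : ℕ, l < k → ∃ K : ℝ, ∀ m,
      ((k : ℝ) - l) * α m - K ≤ ((k : ℝ) - l + 2 * A) * β m := by
    intro k l hlk
    obtain ⟨C, hC, hTl⟩ := hT l
    obtain ⟨C', hC', hTk0⟩ := hTsymm (k + A)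
    have hTk : ∀ y : LamInf β, lamNorm α (k + A) (T.symm y) ≤
        C' * lamNorm β (k + 2 * A) y := by
      intro y
      have h0 := hTk0 y
      rwa [show k + A + A = k + 2 * A by ring] at h0
    refine ⟨Real.log (C * C'), fun m => ?_⟩
    have h := Stmt17.main_ineq α β hβpos hαmono hβmono T A k l hlk C C' hC hC' hTl hTk m
    have hlog := Real.log_le_log (Real.exp_pos _) h
    rw [Real.log_exp, Real.log_mul (by positivity) (Real.exp_ne_zero _),
      Real.log_exp] at hlog
    nlinarith [hlog]
  have S2 : ∀ k l : ℕ, l < k → ∃ K : ℝ, ∀ m,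
      ((k : ℝ) - l) * β m ≤ ((k : ℝ) - l + 2 * A) * α m + K := by
    intro k l hlk
    obtain ⟨C, hC, hTl⟩ := hTsymm l
    obtain ⟨C', hC', hTk0⟩ := hT (k + A)
    have hTk : ∀ y : LamInf α, lamNorm β (k + A) (T.symm.symm y) ≤
        C' * lamNorm α (k + 2 * A) y := by
      intro y
      have h0 := hTk0 y
      rw [show k + A + A = k + 2 * A by ring] at h0
      simpa using h0
    refine ⟨Real.log (C * C'), fun m => ?_⟩
    have h := Stmt17.main_ineq β α hαpos hβmono hαmono T.symm A k l hlk C C' hC hC' hTl hTk m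
    have hlog := Real.log_le_log (Real.exp_pos _) h
    rw [Real.log_exp, Real.log_mul (by positivity) (Real.exp_ne_zero _),
      Real.log_exp] at hlog
    nlinarith [hlog]
  -- global boundedness of the ratio
  have hBB : IsBoundedUnder (· ≥ ·) atTop (fun m => β m / α m) :=
    isBoundedUnder_of ⟨0, fun m => div_nonneg (hβpos m).le (hαpos m).le⟩
  have hBA : IsBoundedUnder (· ≤ ·) atTop (fun m => β m / α m) := by
    obtain ⟨K, h2⟩ := S2 1 0 one_pos
    refine isBoundedUnder_of ⟨1 + 2 * A + |K| / α 0, fun m => ?_⟩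
    have hα := hαpos m
    have hα0 : α 0 ≤ α m := hαmono (Nat.zero_le m)
    rw [div_le_iff₀ hα]
    have e1 := h2 m
    have e2 : |K| / α 0 * α 0 ≤ |K| / α 0 * α m :=
      mul_le_mul_of_nonneg_left hα0 (div_nonneg (abs_nonneg K) (hαpos 0).le)
    have e3 : |K| / α 0 * α 0 = |K| := div_mul_cancel₀ _ (hαpos 0).ne'
    have e4 : K ≤ |K| := le_abs_self K
    push_cast at e1 ⊢
    nlinarith [e1, e2, e3, e4]
  have hinv : Tendsto (fun m => (α m)⁻¹) atTop (nhds 0) := hαtop.inv_tendsto_atTop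
  -- the limsup/liminf bounds
  have ratios : ∀ k l : ℕ, l < k →
      limsup (fun m => β m / α m) atTop ≤ ((k : ℝ) - l + 2 * A) / ((k : ℝ) - l) ∧
      ((k : ℝ) - l) / ((k : ℝ) - l + 2 * A) ≤ liminf (fun m => β m / α m) atTop := by
    intro k l hlk
    obtain ⟨K₁, h1⟩ := S1 k l hlk
    obtain ⟨K₂, h2⟩ := S2 k l hlk
    have hkl : (0 : ℝ) < (k : ℝ) - l := by
      have : (l : ℝ) < k := by exact_mod_cast hlk
      linarith
    have hkl2 : (0 : ℝ) < (k : ℝ) - l + 2 * A := by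
      have := Nat.cast_nonneg (α := ℝ) A
      linarith
    constructor
    · set g : ℕ → ℝ := fun m =>
        ((k : ℝ) - l + 2 * A) / ((k : ℝ) - l) + K₂ / ((k : ℝ) - l) * (α m)⁻¹ with hgdef
      have hg : Tendsto g atTop
          (nhds (((k : ℝ) - l + 2 * A) / ((k : ℝ) - l))) := by
        have h0 : Tendsto (fun m => K₂ / ((k : ℝ) - l) * (α m)⁻¹) atTop
            (nhds (K₂ / ((k : ℝ) - l) * 0)) := hinv.const_mul _
        have h1 := (tendsto_const_nhds
          (x := ((k : ℝ) - l + 2 * A) / ((k : ℝ) - l)) (f := atTop)).add h0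
        simpa using h1
      have hle : ∀ m, β m / α m ≤ g m := by
        intro m
        have hα := hαpos m
        rw [div_le_iff₀ hα]
        have hgm : g m * α m = (((k : ℝ) - l + 2 * A) * α m + K₂) / ((k : ℝ) - l) := by
          rw [hgdef]
          field_simp
        rw [hgm, le_div_iff₀ hkl]
        nlinarith [h2 m]
      have := limsup_le_limsup (Eventually.of_forall hle)
        hBB.isCoboundedUnder_le hg.isBoundedUnder_le
      rwa [hg.limsup_eq] at this
    · set f : ℕ → ℝ := fun m =>
        ((k : ℝ) - l) / ((k : ℝ) - l + 2 * A) - K₁ / ((k : ℝ) - l + 2 * A) * (α m)⁻¹ with hfdef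
      have hf : Tendsto f atTop
          (nhds (((k : ℝ) - l) / ((k : ℝ) - l + 2 * A))) := by
        have h0 : Tendsto (fun m => K₁ / ((k : ℝ) - l + 2 * A) * (α m)⁻¹) atTop
            (nhds (K₁ / ((k : ℝ) - l + 2 * A) * 0)) := hinv.const_mul _
        have h1 := (tendsto_const_nhds
          (x := ((k : ℝ) - l) / ((k : ℝ) - l + 2 * A)) (f := atTop)).sub h0
        simpa using h1
      have hle : ∀ m, f m ≤ β m / α m := by
        intro m
        have hα := hαpos m
        rw [le_div_iff₀ hα]
        have hfm : f m * α m = (((k : ℝ) - l) * α m - K₁) / ((k : ℝ) - l + 2 * A) := by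
          rw [hfdef]
          field_simp
        rw [hfm, div_le_iff₀ hkl2]
        nlinarith [h1 m]
      have := liminf_le_liminf (Eventually.of_forall hle)
        hf.isBoundedUnder_ge hBA.isCoboundedUnder_ge
      rwa [hf.liminf_eq] at this
  -- the limit is 1
  have hsup1 : limsup (fun m => β m / α m) atTop ≤ 1 := by
    apply le_of_forall_gt_imp_ge_of_dense
    intro c hc
    obtain ⟨n, hn⟩ := exists_nat_ge (2 * (A : ℝ) / (c - 1))
    have h := (ratios (n + 1) 0 (Nat.succ_pos n)).1
    refine h.trans ?_
    have hk : (0 : ℝ) < ((n + 1 : ℕ) : ℝ) := by positivity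
    rw [div_le_iff₀ (by push_cast; linarith)]
    have hc1 : (0 : ℝ) < c - 1 := by linarith
    have := (div_le_iff₀ hc1).mp hn
    push_cast at this ⊢
    nlinarith [this]
  have hinf1 : (1 : ℝ) ≤ liminf (fun m => β m / α m) atTop := by
    apply le_of_forall_lt_imp_le_of_dense
    intro c hc
    rcases le_or_gt c 0 with hc0 | hc0
    · have h := (ratios 1 0 one_pos).2
      refine le_trans ?_ h
      have h10 : ((1 : ℕ) : ℝ) - (0 : ℕ) = 1 := by norm_num
      refine le_trans hc0 ?_
      rw [h10]
      positivity
    · obtain ⟨n, hn⟩ := exists_nat_ge (2 * (A : ℝ) * c / (1 - c))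
      have h := (ratios (n + 1) 0 (Nat.succ_pos n)).2
      refine le_trans ?_ h
      have hc1 : (0 : ℝ) < 1 - c := by linarith
      have hden : (0 : ℝ) < ((n + 1 : ℕ) : ℝ) - (0 : ℕ) + 2 * A := by
        push_cast
        have := Nat.cast_nonneg (α := ℝ) A
        have := Nat.cast_nonneg (α := ℝ) n
        linarith
      rw [le_div_iff₀ hden]
      have := (div_le_iff₀ hc1).mp hn
      push_cast at this ⊢
      nlinarith [this]
  have htendsto : Tendsto (fun m => β m / α m) atTop (nhds 1) :=
    tendsto_of_le_liminf_of_limsup_le hinf1 hsup1 hBA hBB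
  refine ⟨?_, ratios, htendsto⟩
  refine ⟨2, one_le_two, ?_⟩
  have hev : ∀ᶠ m in atTop, β m / α m ∈ Set.Ioo (1 / 2 : ℝ) 2 :=
    htendsto (Ioo_mem_nhds (by norm_num) (by norm_num))
  filter_upwards [hev] with m hm
  have hα := hαpos m
  obtain ⟨hm1, hm2⟩ := hm
  constructor
  · have := (lt_div_iff₀ hα).mp hm1
    rw [div_le_iff₀ (by norm_num : (0:ℝ) < 2)]
    linarith
  · have := (div_lt_iff₀ hα).mp hm2
    linarith
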